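/- arXiv:1711.04881 — 3 statements merged into one kernel-verified Lean document; each statement's English description precedes it below -/
import Mathlib

section
/- Let G be a finite connected simple graph on n vertices equipped with an edge-weight function w assigning to each edge an integer weight in {1,…,W}. For each t ∈ {1,…,W−1}, let G^(t) be the spanning subgraph of G containing exactly those edges of weight at most t, and let c(t) be the number of connected components of G^(t). Then the minimum total weight M over all spanning trees of G satisfies M = n − W + Σ_{t=1}^{W−1} c(t). -/
open SimpleGraph Finset

/-- The threshold graph `G^(t)`: the spanning subgraph of `G` containing exactly
the edges of weight at most `t`. -/
def thresholdGraph {V : Type*} (G : SimpleGraph V) (w : Sym2 V → ℕ) (t : ℕ) :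
    SimpleGraph V where
  Adj u v := G.Adj u v ∧ w s(u, v) ≤ t
  symm := by
    constructor
    intro u v h
    exact ⟨h.1.symm, by rw [Sym2.eq_swap]; exact h.2⟩
  loopless := ⟨fun v h => G.loopless.1 v h.1⟩

/-!
For a spanning tree `T`, layer-cake counting gives `w(T) = ∑_{t<W} #{e ∈ T | t < w e}`; since
`T^(t)` is a forest with `n - c_T(t)` edges, this is `∑_{t<W} (c_T(t) - 1)`. From `T^(t) ≤ G^(t)`
we get `c_T(t) ≥ c(t)`, so every spanning tree weighs at least `∑_{t<W} (c(t) - 1)`, and Kruskal's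
construction (nested spanning forests of `G^(0) ≤ G^(1) ≤ ⋯ ≤ G^(W) = G`) gives a tree with
`c_T(t) = c(t)` for all `t`, attaining the bound. Finally `c(0) = n` because weights are positive.
-/

theorem Finset.sum_eq_sum_range_card_filter_lt {α : Type*} {s : Finset α} {f : α → ℕ} {n : ℕ}
    (hf : ∀ x ∈ s, f x ≤ n) : ∑ x ∈ s, f x = ∑ t ∈ range n, #{x ∈ s | t < f x} := by
  refine (sum_congr rfl fun x hx => ?_).trans
    (sum_card_bipartiteAbove_eq_sum_card_bipartiteBelow (fun x t => t < f x))
  have : (range n).bipartiteAbove (fun x t => t < f x) x = range (f x) := by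
    ext t
    simp only [mem_bipartiteAbove, mem_range]
    have := hf x hx
    omega
  rw [this, card_range]

namespace SimpleGraph

variable {V : Type*} {G H : SimpleGraph V}

theorem Reachable.eq_of_forall_adj {β : Sort*} {f : V → β} (hf : ∀ x y, G.Adj x y → f x = f y)
    {u v : V} (h : G.Reachable u v) : f u = f v := by
  obtain ⟨p⟩ := h
  induction p with
  | nil => rfl
  | cons ha _ ih => exact (hf _ _ ha).trans ih

theorem card_connectedComponent_congr (h : G.Reachable = H.Reachable) :
    Nat.card G.ConnectedComponent = Nat.card H.ConnectedComponent := by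
  unfold ConnectedComponent
  rw [h]

theorem Connected.card_connectedComponent (h : G.Connected) :
    Nat.card G.ConnectedComponent = 1 := by
  have := h.preconnected.subsingleton_connectedComponent
  have := h.nonempty.map G.connectedComponentMk
  exact Nat.card_unique

theorem card_connectedComponent_sup_edge_add_one [Finite V] {u v : V} (huv : ¬G.Reachable u v) :
    Nat.card (G ⊔ edge u v).ConnectedComponent + 1 = Nat.card G.ConnectedComponent := by
  classical
  have hu : G.connectedComponentMk u ≠ G.connectedComponentMk v :=
    fun h => huv (ConnectedComponent.exact h)
  let φ := ConnectedComponent.map (Hom.ofLE (le_sup_left : G ≤ G ⊔ edge u v))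
  -- merging the component of `v` into that of `u` is a left inverse of `φ` away from `v`
  let merge (c : G.ConnectedComponent) : G.ConnectedComponent :=
    if c = G.connectedComponentMk v then G.connectedComponentMk u else c
  have merge_adj : ∀ x y, (G ⊔ edge u v).Adj x y →
      merge (G.connectedComponentMk x) = merge (G.connectedComponentMk y) := by
    rintro x y (hxy | hxy)
    · rw [ConnectedComponent.sound hxy.reachable]
    · obtain ⟨⟨rfl, rfl⟩ | ⟨rfl, rfl⟩, -⟩ := (edge_adj ..).1 hxy <;> simp [merge]
  have hinj : Function.Injective fun c : {c // c ≠ G.connectedComponentMk v} => φ c := by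
    rintro ⟨c, hc⟩ ⟨d, hd⟩ hcd
    induction c, d using ConnectedComponent.ind₂ with
    | h x y =>
    have := Reachable.eq_of_forall_adj merge_adj (ConnectedComponent.exact hcd)
    simpa [merge, hc, hd] using this
  have hsurj : Function.Surjective fun c : {c // c ≠ G.connectedComponentMk v} => φ c := by
    intro c
    induction c using ConnectedComponent.ind with
    | h x =>
    by_cases hx : G.connectedComponentMk x = G.connectedComponentMk v
    · refine ⟨⟨_, hu⟩, ConnectedComponent.sound ?_⟩
      have hadj : (G ⊔ edge u v).Adj u v :=
        .inr ((edge_adj ..).2 ⟨.inl ⟨rfl, rfl⟩, fun h => huv (h ▸ .rfl)⟩)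
      exact hadj.reachable.trans ((ConnectedComponent.exact hx).symm.mono le_sup_left)
    · exact ⟨⟨_, hx⟩, rfl⟩
  rw [← Nat.card_eq_of_bijective _ ⟨hinj, hsurj⟩]
  have := Set.ncard_compl_add_ncard {G.connectedComponentMk v}
  rw [Set.ncard_singleton] at this
  exact this

theorem deleteEdges_sup_edge_of_adj {u v : V} (h : G.Adj u v) :
    G.deleteEdges {s(u, v)} ⊔ edge u v = G := by
  ext x y
  simp only [sup_adj, deleteEdges_adj, edge_adj, Set.mem_singleton_iff]
  grind [G.adj_symm, G.ne_of_adj]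

theorem card_connectedComponent_bot :
    Nat.card (⊥ : SimpleGraph V).ConnectedComponent = Nat.card V :=
  (Nat.card_eq_of_bijective _ ⟨fun _ _ h => reachable_bot.1 (ConnectedComponent.exact h),
    ConnectedComponent.ind fun v => ⟨v, rfl⟩⟩).symm

theorem IsAcyclic.ncard_edgeSet_add_card_connectedComponent [Finite V] (hG : G.IsAcyclic) :
    G.edgeSet.ncard + Nat.card G.ConnectedComponent = Nat.card V := by
  induction hn : G.edgeSet.ncard generalizing G with
  | zero =>
    rw [Set.ncard_eq_zero, edgeSet_eq_empty] at hn
    rw [hn, card_connectedComponent_bot, zero_add]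
  | succ n ih =>
    obtain ⟨e, he⟩ := Set.nonempty_of_ncard_ne_zero (by rw [hn]; exact n.succ_ne_zero)
    induction e using Sym2.ind with
    | h u v =>
    have hbridge : ¬(G.deleteEdges {s(u, v)}).Reachable u v :=
      isBridge_iff.1 (isAcyclic_iff_forall_isBridge.1 hG he)
    have hcard : (G.deleteEdges {s(u, v)}).edgeSet.ncard = n := by
      rw [edgeSet_deleteEdges, Set.ncard_sdiff_singleton_of_mem he, hn, Nat.add_sub_cancel]
    have := card_connectedComponent_sup_edge_add_one hbridge
    rw [deleteEdges_sup_edge_of_adj he] at this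
    have := ih (hG.anti (deleteEdges_le _)) hcard
    omega

theorem exists_isAcyclic_le_forall_reachable_inf_eq {H : ℕ → SimpleGraph V} (hH : Monotone H)
    (n : ℕ) : ∃ F ≤ H n, F.IsAcyclic ∧ ∀ t ≤ n, (F ⊓ H t).Reachable = (H t).Reachable := by
  induction n with
  | zero =>
    obtain ⟨F, hle, hF, hreach⟩ := (H 0).exists_isAcyclic_reachable_eq_le
    refine ⟨F, hle, hF, fun t ht => ?_⟩
    rw [Nat.le_zero.1 ht, inf_eq_left.2 hle, hreach]
  | succ n ih =>
    obtain ⟨F, hle, hF, hreach⟩ := ih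
    obtain ⟨F', hFF', hle', hF', hreach'⟩ :=
      exists_isAcyclic_reachable_eq_le_of_le_of_isAcyclic (hle.trans (hH n.le_succ)) hF
    refine ⟨F', hle', hF', fun t ht => ?_⟩
    rcases Nat.le_succ_iff.1 ht with ht | rfl
    · refine le_antisymm (fun u v h => h.mono inf_le_right) ?_
      rw [← hreach t ht]
      exact fun u v h => h.mono (inf_le_inf_right _ hFF')
    · rw [inf_eq_left.2 hle', hreach']

end SimpleGraph

section thresholdGraph

variable {V : Type*} {G T : SimpleGraph V} {w : Sym2 V → ℕ} {t : ℕ}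

theorem thresholdGraph_mono_right (G : SimpleGraph V) (w : Sym2 V → ℕ) :
    Monotone (thresholdGraph G w) :=
  fun _ _ hst _ _ h => ⟨h.1, h.2.trans hst⟩

theorem mem_edgeSet_thresholdGraph {e : Sym2 V} :
    e ∈ (thresholdGraph G w t).edgeSet ↔ e ∈ G.edgeSet ∧ w e ≤ t := by
  induction e using Sym2.ind with
  | h u v => exact Iff.rfl

theorem thresholdGraph_le : thresholdGraph G w t ≤ G :=
  fun _ _ h => h.1

theorem thresholdGraph_mono_left (hT : T ≤ G) : thresholdGraph T w t ≤ thresholdGraph G w t :=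
  fun _ _ h => ⟨hT h.1, h.2⟩

theorem thresholdGraph_of_le (hT : T ≤ G) :
    thresholdGraph T w t = T ⊓ thresholdGraph G w t := by
  ext u v
  exact ⟨fun h => ⟨h.1, hT h.1, h.2⟩, fun h => ⟨h.1, h.2.2⟩⟩

theorem thresholdGraph_eq_self (h : ∀ e ∈ G.edgeSet, w e ≤ t) : thresholdGraph G w t = G := by
  ext u v
  exact ⟨And.left, fun huv => ⟨huv, h _ huv⟩⟩

theorem thresholdGraph_eq_bot (h : ∀ e ∈ G.edgeSet, t < w e) : thresholdGraph G w t = ⊥ := by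
  ext u v
  exact ⟨fun huv => absurd huv.2 (h _ huv.1).not_ge, False.elim⟩

end thresholdGraph

section weight

variable {V : Type*} [Finite V] {G T : SimpleGraph V} {w : Sym2 V → ℕ} {W : ℕ}

theorem ncard_edgeSet_thresholdGraph (t : ℕ) :
    (thresholdGraph G w t).edgeSet.ncard = #{e ∈ G.edgeSet.toFinite.toFinset | w e ≤ t} := by
  rw [← Set.ncard_coe_finset]
  congr
  ext e
  simp [mem_edgeSet_thresholdGraph]

theorem SimpleGraph.IsTree.sum_weight_eq_sum_card_connectedComponent (hT : T.IsTree)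
    (hw : ∀ e ∈ T.edgeSet, w e ≤ W) :
    ((∑ e ∈ T.edgeSet.toFinite.toFinset, w e : ℕ) : ℤ) =
      ∑ t ∈ range W, ((Nat.card (thresholdGraph T w t).ConnectedComponent : ℤ) - 1) := by
  set B := T.edgeSet.toFinite.toFinset
  have hB : #B + 1 = Nat.card V := by
    have := hT.isAcyclic.ncard_edgeSet_add_card_connectedComponent
    rwa [hT.connected.card_connectedComponent, Set.ncard_eq_toFinset_card T.edgeSet] at this
  have hlevel (t : ℕ) : #{e ∈ B | w e ≤ t} + Nat.card (thresholdGraph T w t).ConnectedComponent =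
      Nat.card V := by
    have := (hT.isAcyclic.anti (thresholdGraph_le (w := w) (t := t))
      ).ncard_edgeSet_add_card_connectedComponent
    rwa [ncard_edgeSet_thresholdGraph] at this
  rw [sum_eq_sum_range_card_filter_lt fun e he => hw e (by simpa [B] using he), Nat.cast_sum]
  refine sum_congr rfl fun t _ => ?_
  have hsplit := card_filter_add_card_filter_not (s := B) (fun e => w e ≤ t)
  simp only [not_le] at hsplit
  have := hlevel t
  omega

theorem SimpleGraph.IsTree.sum_card_connectedComponent_le_sum_weight (hTG : T ≤ G)
    (hT : T.IsTree) (hw : ∀ e ∈ G.edgeSet, w e ≤ W) :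
    ∑ t ∈ range W, ((Nat.card (thresholdGraph G w t).ConnectedComponent : ℤ) - 1) ≤
      ((∑ e ∈ T.edgeSet.toFinite.toFinset, w e : ℕ) : ℤ) := by
  rw [hT.sum_weight_eq_sum_card_connectedComponent fun e he => hw e (edgeSet_mono hTG he)]
  gcongr with t
  exact ConnectedComponent.card_le_card_of_le (thresholdGraph_mono_left hTG)

theorem SimpleGraph.Connected.exists_isTree_sum_weight_eq (hG : G.Connected)
    (hw : ∀ e ∈ G.edgeSet, w e ≤ W) :
    ∃ T ≤ G, T.IsTree ∧ ((∑ e ∈ T.edgeSet.toFinite.toFinset, w e : ℕ) : ℤ) =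
      ∑ t ∈ range W, ((Nat.card (thresholdGraph G w t).ConnectedComponent : ℤ) - 1) := by
  obtain ⟨T, hTW, hT, hreach⟩ :=
    exists_isAcyclic_le_forall_reachable_inf_eq (thresholdGraph_mono_right G w) W
  rw [thresholdGraph_eq_self hw] at hTW
  have hTconn : T.Connected := by
    have hTG := hreach W le_rfl
    rw [thresholdGraph_eq_self hw, inf_eq_left.2 hTW] at hTG
    have := hG.nonempty
    exact ⟨fun u v => hTG ▸ hG.preconnected u v⟩
  have hTree : T.IsTree := ⟨hTconn, hT⟩
  refine ⟨T, hTW, hTree, ?_⟩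
  rw [hTree.sum_weight_eq_sum_card_connectedComponent fun e he => hw e (edgeSet_mono hTW he)]
  refine sum_congr rfl fun t ht => ?_
  rw [thresholdGraph_of_le hTW, card_connectedComponent_congr (hreach t (mem_range.1 ht).le)]

end weight

/-- For a finite connected simple graph `G` on `n` vertices with integer
edge weights in `{1, …, W}`, the minimum weight `M` of a spanning tree of `G` satisfies
`M = n - W + ∑_{t=1}^{W-1} c(t)`, where `c(t)` is the number of connected components of
the threshold graph `G^(t)`. -/
theorem mst_formula {V : Type*} [Fintype V] (G : SimpleGraph V) (hG : G.Connected)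
    (W : ℕ) (hW : 1 ≤ W) (w : Sym2 V → ℕ)
    (hw : ∀ e ∈ G.edgeSet, 1 ≤ w e ∧ w e ≤ W)
    (M : ℕ)
    (hM : IsLeast
      {x : ℕ | ∃ T : SimpleGraph V, T ≤ G ∧ T.IsTree ∧
        x = ∑ e ∈ T.edgeSet.toFinite.toFinset, w e} M) :
    (M : ℤ) = (Fintype.card V : ℤ) - (W : ℤ) +
      ∑ t ∈ Finset.Icc 1 (W - 1),
        (Nat.card (thresholdGraph G w t).ConnectedComponent : ℤ) := by
  have hwW : ∀ e ∈ G.edgeSet, w e ≤ W := fun e he => (hw e he).2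
  have hM_eq : (M : ℤ) =
      ∑ t ∈ range W, ((Nat.card (thresholdGraph G w t).ConnectedComponent : ℤ) - 1) := by
    obtain ⟨T, hTG, hT, hTw⟩ := hG.exists_isTree_sum_weight_eq hwW
    refine le_antisymm (hTw ▸ Nat.cast_le.2 (hM.2 ⟨T, hTG, hT, rfl⟩)) ?_
    obtain ⟨T', hT'G, hT', hM'⟩ := hM.1
    exact hM' ▸ hT'.sum_card_connectedComponent_le_sum_weight hT'G hwW
  have hc0 : Nat.card (thresholdGraph G w 0).ConnectedComponent = Fintype.card V := by
    rw [thresholdGraph_eq_bot fun e he => (hw e he).1, card_connectedComponent_bot,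
      Nat.card_eq_fintype_card]
  obtain ⟨k, rfl⟩ : ∃ k, W = k + 1 := ⟨W - 1, by omega⟩
  rw [hM_eq, sum_range_succ', hc0, Nat.add_sub_cancel, ← Ico_add_one_right_eq_Icc,
    sum_Ico_eq_sum_range, Nat.add_sub_cancel, sum_sub_distrib]
  simp only [sum_const, card_range, add_comm 1]
  push_cast
  ring
end

section
/- Let G be a finite simple graph with at most λ vertices and let v be a vertex of G. For every integer k ≥ 1, the number of subtrees of G with exactly k vertices that contain v is at most (k²λ)^{k−1}. -/
/-!
A subtree with `k` vertices containing `v` is determined by its other `k - 1` vertices, at most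
`λ ^ (k - 1)` choices, together with its `k - 1` edges, chosen among the `k (k + 1) / 2 ≤ k ^ 2`
unordered pairs of its vertices, at most `(k ^ 2) ^ (k - 1)` choices.
-/

open Finset SimpleGraph

lemma Nat.choose_two_succ_le_sq (k : ℕ) : (k + 1).choose 2 ≤ k ^ 2 := by
  rw [Nat.choose_two_right, Nat.add_sub_cancel]
  exact Nat.div_le_of_le_mul (by nlinarith)

namespace SimpleGraph

namespace Subgraph

variable {V : Type*} {G : SimpleGraph V}

lemma ext_of_verts_edgeSet {H₁ H₂ : G.Subgraph} (hV : H₁.verts = H₂.verts)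
    (hE : H₁.edgeSet = H₂.edgeSet) : H₁ = H₂ :=
  Subgraph.ext hV <| funext₂ fun _ _ ↦ propext <| by
    rw [← Subgraph.mem_edgeSet, ← Subgraph.mem_edgeSet, hE]

lemma ncard_edgeSet_coe (H : G.Subgraph) : H.coe.edgeSet.ncard = H.edgeSet.ncard := by
  rw [← H.image_coe_edgeSet_coe,
    Set.ncard_image_of_injective _ (Sym2.map.injective Subtype.val_injective)]

lemma ncard_edgeSet_add_one_of_isTree {H : G.Subgraph} (hH : H.coe.IsTree)
    (hfin : H.verts.Finite) :
    H.edgeSet.ncard + 1 = H.verts.ncard := by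
  have : Finite H.verts := hfin
  rw [← ncard_edgeSet_coe, ← Nat.card_coe_set_eq, ← Nat.card_coe_set_eq]
  exact (isTree_iff_connected_and_card.1 hH).2

end Subgraph

theorem card_subgraph_containing_le {V : Type*} [Fintype V] (G : SimpleGraph V)
    (v : V) (k m : ℕ) :
    Nat.card {H : G.Subgraph // v ∈ H.verts ∧ H.verts.ncard = k + 1 ∧ H.edgeSet.ncard = m}
      ≤ (Fintype.card V).choose k * ((k + 2).choose 2).choose m := by
  classical
  let codes : Finset (Σ _ : Finset V, Finset (Sym2 V)) :=
    (powersetCard k univ).sigma fun U ↦ powersetCard m (insert v U).sym2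
  let code (H : {H : G.Subgraph // v ∈ H.verts ∧ H.verts.ncard = k + 1 ∧ H.edgeSet.ncard = m}) :
      codes := ⟨⟨H.1.verts.toFinset.erase v, H.1.edgeSet.toFinset⟩, by
    obtain ⟨H, hv, hk, hm⟩ := H
    have hv' : v ∈ H.verts.toFinset := Set.mem_toFinset.2 hv
    simp only [codes, mem_sigma, mem_powersetCard, insert_erase hv', subset_univ, true_and]
    refine ⟨?_, fun e he ↦ mem_sym2_iff.2 fun a ha ↦ ?_, ?_⟩
    · rw [card_erase_of_mem hv', ← Set.ncard_eq_toFinset_card', hk, Nat.add_sub_cancel]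
    · exact Set.mem_toFinset.2 (H.mem_verts_of_mem_edge (Set.mem_toFinset.1 he) ha)
    · rw [← Set.ncard_eq_toFinset_card', hm]⟩
  have hcode : Function.Injective code := by
    intro ⟨H₁, hv₁, _⟩ ⟨H₂, hv₂, _⟩ h
    simp only [code, Subtype.mk.injEq, Sigma.mk.injEq, heq_eq_eq] at h
    obtain ⟨hV, hE⟩ := h
    refine Subtype.ext (Subgraph.ext_of_verts_edgeSet ?_ (by simpa using hE))
    have := congrArg (insert v) hV
    rwa [insert_erase (Set.mem_toFinset.2 hv₁), insert_erase (Set.mem_toFinset.2 hv₂),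
      Set.toFinset_inj] at this
  calc _ ≤ #codes := by
        simpa using Nat.card_le_card_of_injective code hcode
    _ ≤ ∑ _U ∈ powersetCard k univ, ((k + 2).choose 2).choose m := by
        rw [card_sigma]
        refine sum_le_sum fun U hU ↦ ?_
        rw [card_powersetCard, card_sym2]
        refine Nat.choose_le_choose _ (Nat.choose_le_choose _ (Nat.succ_le_succ ?_))
        have := (mem_powersetCard.1 hU).2
        have := card_insert_le v U
        omega
    _ = _ := by simp [card_powersetCard]

end SimpleGraph

/-- In a finite simple graph with at most `λ` vertices, for every
`k ≥ 1`, the number of subtrees with exactly `k` vertices containing a fixed vertex `v`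
is at most `(k² λ)^{k-1}`. A subtree is a subgraph that is a tree (connected and
acyclic). -/
theorem count_subtrees_containing_vertex {V : Type*} [Fintype V] (G : SimpleGraph V)
    (lam : ℕ) (hlam : Fintype.card V ≤ lam) (v : V) (k : ℕ) (hk : 1 ≤ k) :
    Nat.card {T : G.Subgraph //
        T.coe.IsTree ∧ T.verts.ncard = k ∧ v ∈ T.verts}
      ≤ (k ^ 2 * lam) ^ (k - 1) := by
  obtain ⟨k, rfl⟩ := Nat.exists_eq_add_of_le' hk
  have ncard_edgeSet {T : G.Subgraph} (hT : T.coe.IsTree) (hk : T.verts.ncard = k + 1) :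
      T.edgeSet.ncard = k := by
    have := Subgraph.ncard_edgeSet_add_one_of_isTree hT (Set.toFinite _)
    omega
  calc _ ≤ Nat.card {H : G.Subgraph //
          v ∈ H.verts ∧ H.verts.ncard = k + 1 ∧ H.edgeSet.ncard = k} :=
        Nat.card_le_card_of_injective _ (Subtype.impEmbedding _ _
          fun _ hT ↦ ⟨hT.2.2, hT.2.1, ncard_edgeSet hT.1 hT.2.1⟩).injective
    _ ≤ (Fintype.card V).choose k * ((k + 2).choose 2).choose k :=
        G.card_subgraph_containing_le v k k
    _ ≤ lam ^ k * ((k + 1) ^ 2) ^ k :=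
        Nat.mul_le_mul ((Nat.choose_le_pow _ _).trans (Nat.pow_le_pow_left hlam _))
          ((Nat.choose_le_pow _ _).trans (Nat.pow_le_pow_left (Nat.choose_two_succ_le_sq _) _))
    _ = ((k + 1) ^ 2 * lam) ^ (k + 1 - 1) := by rw [Nat.add_sub_cancel, mul_pow, mul_comm]
end

section
/- Let G be a finite simple graph, let v be a vertex of G, and let k ≥ 1 and b ≥ 1 be integers. Then the number of subtrees T of G with exactly k vertices that contain v and such that exactly b edges of G have exactly one endpoint in the vertex set of T is at most k^{2(k−1)} · (k−1+b)^{k(k−1)}. -/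
/-!
Enumerate a subtree `T ∋ v` by increasing distance from `v` in `T`: every vertex after the root
then has an earlier neighbour in `T`, its parent. Record, for each non-root vertex, the position
of its parent and its index among the `G`-neighbours of the parent. A vertex of `T` has at most
`k - 1` neighbours inside `T`, and each neighbour outside gives a distinct boundary edge, so the
index is below `k - 1 + b`. The record determines the enumeration (by induction along it), and
with it `T`, because the `k - 1` parent–child edges are all the edges of a tree on `k` vertices.
Hence there are at most `(k (k - 1 + b)) ^ (k - 1)` such trees.
-/

open SimpleGraph

namespace SimpleGraph

variable {V : Type*} (G : SimpleGraph V)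

def edgeBoundary (S : Set V) : Set (Sym2 V) :=
  {e | e ∈ G.edgeSet ∧ ∃ u w : V, e = s(u, w) ∧ u ∈ S ∧ w ∉ S}

lemma degree_add_one_le_ncard_add_card_edgeBoundary [Fintype V] [DecidableRel G.Adj]
    {S : Set V} {u : V} (hu : u ∈ S) :
    G.degree u + 1 ≤ S.ncard + Nat.card (G.edgeBoundary S) := by
  classical
  have hinside : ((G.neighborFinset u).filter (· ∈ S)).card + 1 ≤ S.ncard := by
    have hsub : (((G.neighborFinset u).filter (· ∈ S) : Finset V) : Set V) ⊆ S \ {u} := by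
      intro w hw
      simp only [Finset.coe_filter, mem_neighborFinset, Set.mem_ofPred_eq] at hw
      exact ⟨hw.2, hw.1.ne.symm⟩
    have := Set.ncard_le_ncard hsub
    rw [Set.ncard_coe_finset, Set.ncard_sdiff_singleton_of_mem hu] at this
    have := (Set.ncard_pos (s := S)).2 ⟨u, hu⟩
    omega
  have houtside : ((G.neighborFinset u).filter (· ∉ S)).card ≤ Nat.card (G.edgeBoundary S) := by
    rw [← Nat.card_eq_finsetCard]
    refine Nat.card_le_card_of_injective (fun w => ⟨s(u, w.1), ?_⟩) fun w₁ w₂ h =>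
      Subtype.ext (Sym2.congr_right.mp (congrArg Subtype.val h))
    obtain ⟨hw, hwS⟩ := Finset.mem_filter.mp w.2
    exact ⟨(G.mem_neighborFinset u _).mp hw, u, w.1, rfl, hu, hwS⟩
  rw [← card_neighborFinset_eq_degree,
    ← Finset.card_filter_add_card_filter_not (s := G.neighborFinset u) (p := (· ∈ S))]
  omega

open Classical in
noncomputable def neighborIndex [G.LocallyFinite] (u w : V) : ℕ :=
  if h : G.Adj u w then (G.neighborFinset u).equivFin ⟨w, (G.mem_neighborFinset u w).2 h⟩ else 0

variable {G}

lemma neighborIndex_lt [G.LocallyFinite] {u w : V} (h : G.Adj u w) :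
    G.neighborIndex u w < G.degree u := by
  rw [neighborIndex, dif_pos h]
  exact Fin.isLt _

lemma neighborIndex_injOn [G.LocallyFinite] (u : V) :
    Set.InjOn (G.neighborIndex u) (G.neighborSet u) := by
  intro w₁ h₁ w₂ h₂ h
  rw [neighborIndex, dif_pos (show G.Adj u w₁ from h₁), neighborIndex,
    dif_pos (show G.Adj u w₂ from h₂), Fin.val_inj,
    Equiv.apply_eq_iff_eq, Subtype.mk.injEq] at h
  exact h

lemma eq_of_neighborIndex_parent_eq [G.LocallyFinite] {m : ℕ} {f g : Fin (m + 1) → V}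
    {p : Fin m → Fin (m + 1)} (hp : ∀ i, p i < i.succ) (h0 : f 0 = g 0)
    (hf : ∀ i, G.Adj (f (p i)) (f i.succ)) (hg : ∀ i, G.Adj (g (p i)) (g i.succ))
    (hidx : ∀ i, G.neighborIndex (f (p i)) (f i.succ) = G.neighborIndex (g (p i)) (g i.succ)) :
    f = g := by
  funext i
  induction i using WellFoundedLT.induction with
  | _ i ih =>
    cases i using Fin.cases with
    | zero => exact h0
    | succ i =>
      have hparent : f (p i) = g (p i) := ih _ (hp i)
      exact neighborIndex_injOn _ (hf i) (hparent ▸ hg i) (hparent ▸ hidx i)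

lemma Connected.exists_adj_dist_lt (hG : G.Connected) {u v : V} (h : u ≠ v) :
    ∃ w, G.Adj w u ∧ G.dist v w < G.dist v u := by
  obtain ⟨p, hp⟩ := (hG u v).exists_walk_length_eq_dist
  cases p with
  | nil => exact absurd rfl h
  | cons hadj q =>
    refine ⟨_, hadj.symm, ?_⟩
    rw [dist_comm, dist_comm (u := v), ← hp, Walk.length_cons]
    exact Nat.lt_succ_of_le (dist_le q)

lemma exists_equiv_fin_monotone_dist {W : Type*} [Finite W] (H : SimpleGraph W) (v : W) {n : ℕ}
    (hn : Nat.card W = n) : ∃ e : Fin n ≃ W, Monotone fun i => H.dist v (e i) :=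
  let e₀ := (Finite.equivFinOfCardEq hn).symm
  ⟨(Tuple.sort fun i => H.dist v (e₀ i)).trans e₀,
    Tuple.monotone_sort fun i => H.dist v (e₀ i)⟩

lemma Connected.exists_lt_adj_of_monotone_dist {W : Type*} {H : SimpleGraph W}
    (hH : H.Connected) {v : W} {n : ℕ} {e : Fin n ≃ W} (he : Monotone fun i => H.dist v (e i))
    {i : Fin n} (hi : e i ≠ v) : ∃ j < i, H.Adj (e j) (e i) := by
  obtain ⟨w, hw, hlt⟩ := hH.exists_adj_dist_lt hi
  refine ⟨e.symm w, lt_of_not_ge fun hle => ?_, by simpa using hw⟩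
  have := he hle
  simp only [Equiv.apply_symm_apply] at this
  omega

lemma Connected.apply_zero_eq_of_monotone_dist {W : Type*} {H : SimpleGraph W}
    (hH : H.Connected) {v : W} {n : ℕ} {e : Fin (n + 1) ≃ W}
    (he : Monotone fun i => H.dist v (e i)) : e 0 = v := by
  have := he (Fin.zero_le (e.symm v))
  simp only [Equiv.apply_symm_apply, dist_self, nonpos_iff_eq_zero, hH.dist_eq_zero_iff] at this
  exact this.symm

namespace Subgraph

lemma exists_enumeration_of_connected {T : G.Subgraph} (hT : T.coe.Connected) {v : V}
    (hv : v ∈ T.verts) {m : ℕ} (hcard : T.verts.ncard = m + 1) :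
    ∃ f : Fin (m + 1) → V, f.Injective ∧ Set.range f = T.verts ∧ f 0 = v ∧
      ∀ i : Fin m, ∃ j < i.succ, T.Adj (f j) (f i.succ) := by
  have : Finite T.verts := Set.finite_of_ncard_pos (by omega)
  obtain ⟨e, he⟩ := exists_equiv_fin_monotone_dist T.coe ⟨v, hv⟩
    (by rw [Nat.card_coe_set_eq, hcard])
  have he0 := hT.apply_zero_eq_of_monotone_dist he
  refine ⟨Subtype.val ∘ e, Subtype.val_injective.comp e.injective, ?_, by simp [he0], fun i => ?_⟩
  · rw [Set.range_comp, e.range_eq_univ, Set.image_univ, Subtype.range_coe]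
  · have hi : e i.succ ≠ ⟨v, hv⟩ := by
      rw [← he0, Ne, e.apply_eq_iff_eq]
      exact Fin.succ_ne_zero i
    simpa using hT.exists_lt_adj_of_monotone_dist he hi

lemma ncard_edgeSet_add_one_of_isTree_s11 {T : G.Subgraph} (hT : T.coe.IsTree) [Finite T.verts] :
    T.edgeSet.ncard + 1 = T.verts.ncard := by
  rw [← image_coe_edgeSet_coe,
    Set.ncard_image_of_injective _ (Sym2.map.injective Subtype.val_injective),
    ← Nat.card_coe_set_eq, ← Nat.card_coe_set_eq T.verts]
  exact (isTree_iff_connected_and_card.mp hT).2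

lemma edgeSet_eq_range_of_isTree {T : G.Subgraph} (hT : T.coe.IsTree) {m : ℕ}
    {f : Fin (m + 1) → V} (hf : f.Injective) (hrange : Set.range f = T.verts)
    {p : Fin m → Fin (m + 1)} (hp : ∀ i, p i < i.succ) (hadj : ∀ i, T.Adj (f (p i)) (f i.succ)) :
    T.edgeSet = Set.range fun i => s(f (p i), f i.succ) := by
  have : Finite T.verts := hrange ▸ Set.finite_range f
  have hinj : Function.Injective fun i => s(f (p i), f i.succ) := by
    intro a c hac
    rcases Sym2.eq_iff.mp hac with ⟨-, hsucc⟩ | ⟨hpa, hpc⟩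
    · exact Fin.succ_injective _ (hf hsucc)
    · have h₁ := hp a
      have h₂ := hp c
      rw [hf hpa] at h₁
      rw [← hf hpc] at h₂
      exact absurd (h₁.trans h₂) (lt_irrefl _)
  have hfin : T.edgeSet.Finite := image_coe_edgeSet_coe T ▸ (Set.toFinite _).image _
  refine (Set.eq_of_subset_of_ncard_le (Set.range_subset_iff.mpr hadj) ?_ hfin).symm
  have := ncard_edgeSet_add_one_of_isTree_s11 hT
  rw [← Set.image_univ, Set.ncard_image_of_injective _ hinj, Set.ncard_univ, Nat.card_fin]
  rw [← hrange, Set.ncard_range_of_injective hf, Nat.card_fin] at this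
  omega

def IsRootedCode [G.LocallyFinite] (T : G.Subgraph) (v : V) {m d : ℕ}
    (c : Fin m → Fin (m + 1) × Fin d) : Prop :=
  ∃ f : Fin (m + 1) → V, f.Injective ∧ Set.range f = T.verts ∧ f 0 = v ∧
    ∀ i, (c i).1 < i.succ ∧ T.Adj (f (c i).1) (f i.succ) ∧
      G.neighborIndex (f (c i).1) (f i.succ) = (c i).2

lemma exists_isRootedCode [Fintype V] [DecidableRel G.Adj] {T : G.Subgraph}
    (hT : T.coe.Connected) {v : V} (hv : v ∈ T.verts) {m b : ℕ} (hcard : T.verts.ncard = m + 1)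
    (hb : Nat.card (G.edgeBoundary T.verts) = b) :
    ∃ c : Fin m → Fin (m + 1) × Fin (m + b), T.IsRootedCode v c := by
  obtain ⟨f, hf, hrange, hf0, hparent⟩ := exists_enumeration_of_connected hT hv hcard
  choose p hp hadj using hparent
  have hlt : ∀ i, G.neighborIndex (f (p i)) (f i.succ) < m + b := fun i => by
    have hidx := neighborIndex_lt (hadj i).adj_sub
    have hdeg := G.degree_add_one_le_ncard_add_card_edgeBoundary
      (hrange ▸ Set.mem_range_self (p i) : f (p i) ∈ T.verts)
    omega
  exact ⟨fun i => (p i, ⟨_, hlt i⟩), f, hf, hrange, hf0, fun i => ⟨hp i, hadj i, rfl⟩⟩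

lemma IsRootedCode.eq [G.LocallyFinite] {T₁ T₂ : G.Subgraph} (hT₁ : T₁.coe.IsTree)
    (hT₂ : T₂.coe.IsTree) {v : V} {m d : ℕ} {c : Fin m → Fin (m + 1) × Fin d}
    (h₁ : T₁.IsRootedCode v c) (h₂ : T₂.IsRootedCode v c) : T₁ = T₂ := by
  obtain ⟨f, hf, hfr, hf0, hfc⟩ := h₁
  obtain ⟨g, -, hgr, hg0, hgc⟩ := h₂
  obtain rfl : f = g := eq_of_neighborIndex_parent_eq (fun i => (hfc i).1) (hf0.trans hg0.symm)
    (fun i => (hfc i).2.1.adj_sub) (fun i => (hgc i).2.1.adj_sub)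
    (fun i => (hfc i).2.2.trans (hgc i).2.2.symm)
  have hE : T₁.edgeSet = T₂.edgeSet := by
    rw [edgeSet_eq_range_of_isTree hT₁ hf hfr (fun i => (hfc i).1) (fun i => (hfc i).2.1),
      edgeSet_eq_range_of_isTree hT₂ hf hgr (fun i => (hgc i).1) (fun i => (hgc i).2.1)]
  exact Subgraph.ext (hfr.symm.trans hgr)
    (funext₂ fun x y => propext (Set.ext_iff.mp hE s(x, y)))

end Subgraph

variable (G) in
theorem card_subtrees_le [Fintype V] (v : V) (m b : ℕ) :
    Nat.card {T : G.Subgraph // T.coe.IsTree ∧ T.verts.ncard = m + 1 ∧ v ∈ T.verts ∧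
      Nat.card (G.edgeBoundary T.verts) = b} ≤ ((m + 1) * (m + b)) ^ m := by
  classical
  choose c hc using fun T : {T : G.Subgraph // T.coe.IsTree ∧ T.verts.ncard = m + 1 ∧
      v ∈ T.verts ∧ Nat.card (G.edgeBoundary T.verts) = b} =>
    Subgraph.exists_isRootedCode T.2.1.connected T.2.2.2.1 T.2.2.1 T.2.2.2.2
  calc _ ≤ Nat.card (Fin m → Fin (m + 1) × Fin (m + b)) :=
        Nat.card_le_card_of_injective c fun T₁ T₂ h =>
          Subtype.ext ((hc T₁).eq T₁.2.1 T₂.2.1 (h ▸ hc T₂))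
    _ = _ := by simp

end SimpleGraph

theorem count_subtrees_with_boundary_general {V : Type*} [Fintype V] (G : SimpleGraph V)
    (v : V) (k b : ℕ) :
    Nat.card {T : G.Subgraph //
        T.coe.IsTree ∧ T.verts.ncard = k ∧ v ∈ T.verts ∧
        Nat.card {e : Sym2 V // e ∈ G.edgeSet ∧
          ∃ u w : V, e = s(u, w) ∧ u ∈ T.verts ∧ w ∉ T.verts} = b}
      ≤ k ^ (2 * (k - 1)) * (k - 1 + b) ^ (k * (k - 1)) := by
  obtain _ | m := k
  · convert Nat.zero_le _
    exact Nat.card_eq_zero.mpr (.inl ⟨fun ⟨_, _, hcard, hv, _⟩ =>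
      ((Set.ncard_pos (Set.toFinite _)).mpr ⟨v, hv⟩).ne' hcard⟩)
  calc _ ≤ ((m + 1) * (m + b)) ^ m := G.card_subtrees_le v m b
    _ = (m + 1) ^ m * (m + b) ^ m := mul_pow _ _ _
    _ ≤ ((m + 1) ^ m) ^ 2 * ((m + b) ^ m) ^ (m + 1) :=
        Nat.mul_le_mul (Nat.le_self_pow two_ne_zero _) (Nat.le_self_pow m.succ_ne_zero _)
    _ = _ := by rw [← pow_mul, ← pow_mul, Nat.add_sub_cancel, mul_comm m 2, mul_comm m (m + 1)]

/-- In a finite simple graph `G`, for integers `k ≥ 1` and `b ≥ 1`, the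
number of subtrees `T` of `G` with exactly `k` vertices containing a fixed vertex `v`
and whose edge boundary in `G` has exactly `b` edges (edges of `G` with exactly one
endpoint in `V(T)`) is at most `k^{2(k-1)} · (k-1+b)^{k(k-1)}`. -/
theorem count_subtrees_with_boundary {V : Type*} [Fintype V] (G : SimpleGraph V)
    (v : V) (k b : ℕ) (hk : 1 ≤ k) (hb : 1 ≤ b) :
    Nat.card {T : G.Subgraph //
        T.coe.IsTree ∧ T.verts.ncard = k ∧ v ∈ T.verts ∧
        Nat.card {e : Sym2 V // e ∈ G.edgeSet ∧
          ∃ u w : V, e = s(u, w) ∧ u ∈ T.verts ∧ w ∉ T.verts} = b}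
      ≤ k ^ (2 * (k - 1)) * (k - 1 + b) ^ (k * (k - 1)) :=
  count_subtrees_with_boundary_general G v k b
end
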